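/- The Fenchel–Young loss upper-bounds the asymmetric Hausdorff divergence: assume the kernel matrix K = (exp(−c_{ij}/2))_{i,j} is positive definite. For every α ∈ △^d and f ∈ ℝ^d: D_Ω(α, g-softmax(f)) = ℓ_Ω(α, f^E) = ℓ_Ω(α, f) − ⟨α, f^E − f⟩ ≤ ℓ_Ω(α, f), with equality D_Ω(α, g-softmax(f)) = ℓ_Ω(α, f) whenever the support of g-softmax(f) equals the support of α. -/

import Mathlib

open Finset Real Filter

noncomputable section

/-- The probability simplex in `ℝ^d`. -/
def simplexS (d : ℕ) : Set (Fin d → ℝ) := stdSimplex ℝ (Fin d)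

/-- Transport plans between `α` and `β`: nonnegative matrices with prescribed marginals,
supported where `α i * β j > 0`. -/
def couplings {d : ℕ} (α β : Fin d → ℝ) : Set (Matrix (Fin d) (Fin d) ℝ) :=
  {p | (∀ i j, 0 ≤ p i j) ∧ (∀ i, ∑ j, p i j = α i) ∧ (∀ j, ∑ i, p i j = β j) ∧
    ∀ i j, α i * β j = 0 → p i j = 0}

/-- The entropy-regularized transport cost of a plan `p` (with the convention `0 log 0 = 0`,
which holds automatically since `Real.log 0 = 0`). -/
def OTcost {d : ℕ} (C : Matrix (Fin d) (Fin d) ℝ) (ε : ℝ) (α β : Fin d → ℝ)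
    (p : Matrix (Fin d) (Fin d) ℝ) : ℝ :=
  (∑ i, ∑ j, p i j * C i j) + ε * ∑ i, ∑ j, p i j * Real.log (p i j / (α i * β j))

/-- Entropy-regularized optimal transport cost `OT_{C,ε}(α,β)`. -/
def OT {d : ℕ} (C : Matrix (Fin d) (Fin d) ℝ) (ε : ℝ) (α β : Fin d → ℝ) : ℝ :=
  sInf (OTcost C ε α β '' couplings α β)

/-- The Sinkhorn negentropy `Ω_C(α) = -(1/2) OT_{C,2}(α,α)`. -/
def Omega {d : ℕ} (C : Matrix (Fin d) (Fin d) ℝ) (α : Fin d → ℝ) : ℝ :=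
  -(1 / 2) * OT C 2 α α

open scoped Classical

/-- `Φ_C(α,f) = Σ_{i,j} α_i α_j exp(-(f_i + f_j + c_{ij})/2)`. -/
def Phi {d : ℕ} (C : Matrix (Fin d) (Fin d) ℝ) (α f : Fin d → ℝ) : ℝ :=
  ∑ i, ∑ j, α i * α j * Real.exp (-(f i + f j + C i j) / 2)

/-- The geometric log-sum-exp `Ω_C^*(f) = -log min_{α ∈ △^d} Φ_C(α, f)`. -/
def OmegaStar {d : ℕ} (C : Matrix (Fin d) (Fin d) ℝ) (f : Fin d → ℝ) : ℝ :=
  -Real.log (sInf ((fun α => Phi C α f) '' simplexS d))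

/-- The geometric softmax: the (unique, when the kernel is positive definite) minimizer of
`Φ_C(·, f)` over the simplex. -/
def gsoftmax {d : ℕ} (C : Matrix (Fin d) (Fin d) ℝ) (f : Fin d → ℝ) : Fin d → ℝ :=
  if h : ∃ α ∈ simplexS d, IsMinOn (fun β => Phi C β f) (simplexS d) α
  then h.choose else fun _ => 0

/-- The soft C-transform `T(f,α)_i = -2 log Σ_j α_j exp((f_j - c_{ij})/2)`. -/
def Tsoft {d : ℕ} (C : Matrix (Fin d) (Fin d) ℝ) (f α : Fin d → ℝ) : Fin d → ℝ :=
  fun i => -2 * Real.log (∑ j, α j * Real.exp ((f j - C i j) / 2))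

/-- `f` is the symmetric Sinkhorn potential of `α`: `-f = T(-f, α)`. -/
def IsSinkhornPotential {d : ℕ} (C : Matrix (Fin d) (Fin d) ℝ) (α f : Fin d → ℝ) : Prop :=
  -f = Tsoft C (-f) α

/-- The symmetric Sinkhorn potential `∇Ω(α)`: the (unique, when the kernel is positive
definite) `f` with `-f = T(-f, α)`. -/
def gradOmega {d : ℕ} (C : Matrix (Fin d) (Fin d) ℝ) (α : Fin d → ℝ) : Fin d → ℝ :=
  if h : ∃ f : Fin d → ℝ, IsSinkhornPotential C α f then h.choose else fun _ => 0

/-- The extrapolation `f^E = -T(-(f - Ω_C^*(f)·1), g-softmax(f)) + Ω_C^*(f)·1`. -/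
def extrap {d : ℕ} (C : Matrix (Fin d) (Fin d) ℝ) (f : Fin d → ℝ) : Fin d → ℝ :=
  fun i => -(Tsoft C (fun j => -(f j - OmegaStar C f)) (gsoftmax C f) i) + OmegaStar C f

/-- The kernel matrix `K = (exp(-c_{ij}/2))_{ij}`. -/
def kernelK {d : ℕ} (C : Matrix (Fin d) (Fin d) ℝ) : Matrix (Fin d) (Fin d) ℝ :=
  Matrix.of fun i j => Real.exp (-(C i j) / 2)

/-- The Fenchel-Young loss `ℓ_Ω(α,f) = Ω_C^*(f) + Ω_C(α) - ⟨α, f⟩`. -/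
def FYloss {d : ℕ} (C : Matrix (Fin d) (Fin d) ℝ) (α f : Fin d → ℝ) : ℝ :=
  OmegaStar C f + Omega C α - ∑ i, α i * f i

/-- The asymmetric Hausdorff (Bregman) divergence
`D_Ω(α,β) = Ω_C(α) - Ω_C(β) - ⟨∇Ω(β), α - β⟩`. -/
def DOmega {d : ℕ} (C : Matrix (Fin d) (Fin d) ℝ) (α β : Fin d → ℝ) : ℝ :=
  Omega C α - Omega C β - ∑ i, gradOmega C β i * (α i - β i)


/-!
Write `β = g-softmax(f)`, `M_f = diag(e^{-f/2}) K diag(e^{-f/2})`, so that `Φ_C(α, f) = αᵀ M_f α`,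
and `m = M_f β`. The first-order conditions for minimizing `Φ_C(·, f)` over the simplex give
`m ≥ Φ_C(β, f)`, with equality on `supp β`, and unfolding the soft C-transform gives
`f^E = f + 2 log (m / Φ_C(β, f))`. Hence `f^E ≥ f`, with equality on `supp β`, and
`M_{f^E} β` is constant; as `Φ_C(·, f^E)` is convex (`K ⪰ 0`), `β` still minimizes it and
`Ω_C^*(f^E) = Ω_C^*(f)`. Moreover `h = f^E - Ω_C^*(f)` solves the symmetric Sinkhorn equation
for `β`: the Gibbs plan of `h` is optimal for `OT_{C,2}(β, β)` by Gibbs' inequality, so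
`Ω_C(β) = ⟨β, h⟩`, and `h = ∇Ω(β)` since `K ≻ 0` makes Sinkhorn potentials unique. Then
`D_Ω(α, β) = Ω_C(α) - ⟨α, h⟩ = ℓ_Ω(α, f^E)`, and the rest follows from `f^E ≥ f`.
-/

open Topology Matrix

lemma dotProduct_pos_of_mem_stdSimplex {ι : Type*} [Fintype ι] {x y : ι → ℝ}
    (hx : x ∈ stdSimplex ℝ ι) (hy : ∀ i, 0 < y i) : 0 < x ⬝ᵥ y := by
  obtain ⟨j, -, hj⟩ : ∃ j ∈ univ, (0 : ι → ℝ) j < x j :=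
    exists_lt_of_sum_lt (by simp [hx.2])
  exact sum_pos' (fun i _ => mul_nonneg (hx.1 i) (hy i).le) ⟨j, mem_univ j, mul_pos hj (hy j)⟩

namespace Matrix

variable {ι : Type*} [Fintype ι] {M : Matrix ι ι ℝ} {β : ι → ℝ}

lemma dotProduct_mulVec_add_self (hM : M.IsSymm) (x v : ι → ℝ) :
    (x + v) ⬝ᵥ M *ᵥ (x + v) =
      x ⬝ᵥ M *ᵥ x + 2 * (v ⬝ᵥ M *ᵥ x) + v ⬝ᵥ M *ᵥ v := by
  have hswap : x ⬝ᵥ M *ᵥ v = v ⬝ᵥ M *ᵥ x := by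
    rw [dotProduct_mulVec, ← mulVec_transpose, hM.eq, dotProduct_comm]
  simp only [mulVec_add, add_dotProduct, dotProduct_add, hswap]
  ring

lemma mulVec_apply_ge_of_isMinOn (hM : M.IsSymm) (hβ : β ∈ stdSimplex ℝ ι)
    (hmin : IsMinOn (fun x => x ⬝ᵥ M *ᵥ x) (stdSimplex ℝ ι) β) (i : ι) :
    β ⬝ᵥ M *ᵥ β ≤ (M *ᵥ β) i := by
  set v := Pi.single i 1 - β
  set a := v ⬝ᵥ M *ᵥ β
  have ha : a = (M *ᵥ β) i - β ⬝ᵥ M *ᵥ β := by simp [a, v, sub_dotProduct]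
  have hpos : ∀ t ∈ Set.Ioc (0 : ℝ) 1, 0 ≤ 2 * a + t * (v ⬝ᵥ M *ᵥ v) := by
    rintro t ⟨ht0, ht1⟩
    have hmem : β + t • v ∈ stdSimplex ℝ ι := by
      convert convex_stdSimplex ℝ ι hβ (single_mem_stdSimplex ℝ i) (sub_nonneg.2 ht1) ht0.le
        (by ring) using 1
      simp only [v, smul_sub]
      module
    have hle : β ⬝ᵥ M *ᵥ β ≤ (β + t • v) ⬝ᵥ M *ᵥ (β + t • v) := hmin hmem
    simp only [dotProduct_mulVec_add_self hM, mulVec_smul, smul_dotProduct, dotProduct_smul,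
      smul_eq_mul] at hle
    nlinarith
  have hlim : Tendsto (fun t => 2 * a + t * (v ⬝ᵥ M *ᵥ v)) (𝓝[>] 0) (𝓝 (2 * a)) := by
    refine Tendsto.mono_left ?_ nhdsWithin_le_nhds
    exact (continuous_const.add (continuous_id.mul continuous_const)).tendsto' 0 _ (by simp)
  have := ge_of_tendsto hlim (eventually_of_mem (Ioc_mem_nhdsGT one_pos) hpos)
  linarith

lemma mulVec_apply_eq_of_isMinOn (hM : M.IsSymm) (hβ : β ∈ stdSimplex ℝ ι)
    (hmin : IsMinOn (fun x => x ⬝ᵥ M *ᵥ x) (stdSimplex ℝ ι) β) {i : ι}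
    (hi : β i ≠ 0) :
    (M *ᵥ β) i = β ⬝ᵥ M *ᵥ β := by
  have hge := mulVec_apply_ge_of_isMinOn hM hβ hmin
  have hsum : ∑ j, β j * ((M *ᵥ β) j - β ⬝ᵥ M *ᵥ β) = 0 := by
    simp only [mul_sub, sum_sub_distrib, ← sum_mul, hβ.2, one_mul]
    exact sub_self _
  have := (sum_eq_zero_iff_of_nonneg fun j _ => mul_nonneg (hβ.1 j) (sub_nonneg.2 (hge j))).1
    hsum i (mem_univ i)
  linarith [(mul_eq_zero.1 this).resolve_left hi]

lemma isMinOn_of_mulVec_eq_const (hM : M.PosSemidef) {c : ℝ} (hc : M *ᵥ β = fun _ => c) :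
    IsMinOn (fun x => x ⬝ᵥ M *ᵥ x) {x | ∑ i, x i = ∑ i, β i} β := by
  intro γ hγ
  have hdir : (γ - β) ⬝ᵥ M *ᵥ β = 0 := by
    simp [hc, dotProduct, ← sum_mul, sub_mul, sum_sub_distrib,
      show ∑ i, γ i = ∑ i, β i from hγ]
  have hQ := hM.dotProduct_mulVec_nonneg (γ - β)
  have hsymm : M.IsSymm := by simpa [IsSymm] using hM.isHermitian.eq
  simp only [star_trivial] at hQ
  show β ⬝ᵥ M *ᵥ β ≤ γ ⬝ᵥ M *ᵥ γ
  rw [show γ = β + (γ - β) by abel, dotProduct_mulVec_add_self hsymm, hdir]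
  linarith

lemma PosDef.eq_of_mul_mulVec_mul_eq_one {K : Matrix ι ι ℝ} (hK : K.PosDef) {v w : ι → ℝ}
    (hβ : ∀ i, 0 ≤ β i) (hv : ∀ i, 0 < v i) (hw : ∀ i, 0 < w i)
    (hv1 : ∀ i, v i * (K *ᵥ (v * β)) i = 1) (hw1 : ∀ i, w i * (K *ᵥ (w * β)) i = 1) :
    v = w := by
  have hKv i : (K *ᵥ (v * β)) i = (v i)⁻¹ := eq_inv_of_mul_eq_one_right (hv1 i)
  have hKw i : (K *ᵥ (w * β)) i = (w i)⁻¹ := eq_inv_of_mul_eq_one_right (hw1 i)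
  -- As `K (v β) = v⁻¹`, the `K`-energy of `v β - w β` is `∑ β (v - w) (v⁻¹ - w⁻¹) ≤ 0`.
  have hxy : v * β = w * β := by
    by_contra hne
    have hpos := hK.dotProduct_mulVec_pos (sub_ne_zero.2 hne)
    have hnonpos : star (v * β - w * β) ⬝ᵥ K *ᵥ (v * β - w * β) ≤ 0 := by
      simp only [star_trivial, mulVec_sub, dotProduct, Pi.sub_apply, Pi.mul_apply, hKv, hKw]
      refine sum_nonpos fun i _ => ?_
      have hvi := hv i
      have hwi := hw i
      have : (v i * β i - w i * β i) * ((v i)⁻¹ - (w i)⁻¹) =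
          -(β i * (v i - w i) ^ 2 / (v i * w i)) := by
        field_simp
        ring
      rw [this, neg_nonpos]
      have := hβ i
      positivity
    linarith
  funext i
  simpa [hKv, hKw] using congrFun (congrArg (K *ᵥ ·) hxy) i

end Matrix

lemma Real.sub_le_mul_log_div {p q : ℝ} (hp : 0 ≤ p) (hq : 0 < q) :
    p - q ≤ p * log (p / q) := by
  rcases hp.eq_or_lt with rfl | hp
  · simpa using hq.le
  have := one_sub_inv_le_log_of_pos (div_pos hp hq)
  rw [inv_div] at this
  calc p - q = p * (1 - q / p) := by field_simp
    _ ≤ p * log (p / q) := mul_le_mul_of_nonneg_left this hp.le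

section EntropicTransport

variable {d : ℕ} {C : Matrix (Fin d) (Fin d) ℝ} {ε : ℝ} {α β : Fin d → ℝ}

def gibbsPlan (C : Matrix (Fin d) (Fin d) ℝ) (ε : ℝ) (α β f g : Fin d → ℝ) :
    Matrix (Fin d) (Fin d) ℝ :=
  of fun i j => α i * β j * exp ((f i + g j - C i j) / ε)

lemma OTcost_eq_sum_sum (p : Matrix (Fin d) (Fin d) ℝ) :
    OTcost C ε α β p =
      ∑ i, ∑ j, (p i j * C i j + ε * (p i j * log (p i j / (α i * β j)))) := by
  simp only [OTcost, mul_sum, sum_add_distrib]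

lemma sum_sum_mul_add_of_mem_couplings {p : Matrix (Fin d) (Fin d) ℝ} (hp : p ∈ couplings α β)
    (f g : Fin d → ℝ) :
    ∑ i, ∑ j, p i j * (f i + g j) = ∑ i, α i * f i + ∑ j, β j * g j := by
  simp only [mul_add, sum_add_distrib]
  rw [sum_comm (f := fun i j => p i j * g j)]
  simp only [← sum_mul, hp.2.1, hp.2.2.1]

lemma OTcost_gibbsPlan (hε : ε ≠ 0) {f g : Fin d → ℝ}
    (hq : gibbsPlan C ε α β f g ∈ couplings α β) :
    OTcost C ε α β (gibbsPlan C ε α β f g) = ∑ i, α i * f i + ∑ j, β j * g j := by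
  rw [OTcost_eq_sum_sum, ← sum_sum_mul_add_of_mem_couplings hq]
  refine sum_congr rfl fun i _ => sum_congr rfl fun j _ => ?_
  rcases eq_or_ne (α i * β j) 0 with h0 | h0
  · simp [hq.2.2.2 i j h0]
  · simp only [gibbsPlan, of_apply, mul_div_cancel_left₀ _ h0, log_exp]
    field_simp
    ring

lemma le_OTcost_of_gibbsPlan_mem_couplings (hε : 0 < ε) {f g : Fin d → ℝ}
    (hq : gibbsPlan C ε α β f g ∈ couplings α β) {p : Matrix (Fin d) (Fin d) ℝ}
    (hp : p ∈ couplings α β) :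
    ∑ i, α i * f i + ∑ j, β j * g j ≤ OTcost C ε α β p := by
  set q := gibbsPlan C ε α β f g
  -- Entrywise, the cost of `p` exceeds its potential part by `ε` times a relative entropy.
  have hentry : ∀ i j, p i j * (f i + g j) + ε * (p i j - q i j) ≤
      p i j * C i j + ε * (p i j * log (p i j / (α i * β j))) := by
    intro i j
    rcases (hp.1 i j).eq_or_lt with hp0 | hp0
    · rw [← hp0]
      have := mul_nonneg hε.le (hq.1 i j)
      simp only [zero_mul, zero_add, zero_sub, zero_div, log_zero, mul_zero]
      linarith
    have hαβ : α i * β j ≠ 0 := fun h => hp0.ne' (hp.2.2.2 i j h)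
    have hqpos : 0 < q i j := lt_of_le_of_ne (hq.1 i j) fun h => by
      simp [q, gibbsPlan, hαβ, exp_ne_zero] at h
    have hlog : log (p i j / (α i * β j)) = log (p i j / q i j) + (f i + g j - C i j) / ε := by
      rw [log_div hp0.ne' hαβ, log_div hp0.ne' hqpos.ne']
      simp only [q, gibbsPlan, of_apply, log_mul hαβ (exp_ne_zero _), log_exp]
      ring
    have := Real.sub_le_mul_log_div hp0.le hqpos
    rw [hlog, mul_add, mul_add]
    field_simp
    nlinarith
  have hmass : ∑ i, ∑ j, (p i j - q i j) = 0 := by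
    simp only [sum_sub_distrib, hp.2.1, hq.2.1, sub_self, sum_const_zero]
  calc ∑ i, α i * f i + ∑ j, β j * g j
      = ∑ i, ∑ j, p i j * (f i + g j) + ε * ∑ i, ∑ j, (p i j - q i j) := by
        rw [hmass, mul_zero, add_zero, sum_sum_mul_add_of_mem_couplings hp]
    _ = ∑ i, ∑ j, (p i j * (f i + g j) + ε * (p i j - q i j)) := by
        simp only [mul_sum, sum_add_distrib]
    _ ≤ OTcost C ε α β p := by
        rw [OTcost_eq_sum_sum]
        exact sum_le_sum fun i _ => sum_le_sum fun j _ => hentry i j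

lemma OT_eq_of_gibbsPlan_mem_couplings (hε : 0 < ε) {f g : Fin d → ℝ}
    (hq : gibbsPlan C ε α β f g ∈ couplings α β) :
    OT C ε α β = ∑ i, α i * f i + ∑ j, β j * g j := by
  refine IsLeast.csInf_eq ⟨⟨_, hq, OTcost_gibbsPlan hε.ne' hq⟩, ?_⟩
  rintro _ ⟨p, hp, rfl⟩
  exact le_OTcost_of_gibbsPlan_mem_couplings hε hq hp

end EntropicTransport

section SinkhornPotential

variable {d : ℕ} {C : Matrix (Fin d) (Fin d) ℝ}

def scaledKernel (C : Matrix (Fin d) (Fin d) ℝ) (f : Fin d → ℝ) :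
    Matrix (Fin d) (Fin d) ℝ :=
  of fun i j => exp (-(f i + f j + C i j) / 2)

lemma phi_eq_dotProduct_mulVec (α f : Fin d → ℝ) :
    Phi C α f = α ⬝ᵥ scaledKernel C f *ᵥ α := by
  simp only [Phi, dotProduct, mulVec, scaledKernel, of_apply, mul_sum]
  exact sum_congr rfl fun i _ => sum_congr rfl fun j _ => by ring

lemma scaledKernel_eq_diagonal_mul (f : Fin d → ℝ) :
    scaledKernel C f =
      diagonal (fun i => exp (-f i / 2)) * kernelK C *
        diagonal (fun i => exp (-f i / 2)) := by
  ext i j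
  simp only [scaledKernel, kernelK, of_apply, diagonal_mul, mul_diagonal,
    ← exp_add]
  ring_nf

lemma scaledKernel_isSymm (hC : C.IsSymm) (f : Fin d → ℝ) : (scaledKernel C f).IsSymm := by
  ext i j
  simp only [transpose_apply, scaledKernel, of_apply, hC.apply i j]
  ring_nf

lemma scaledKernel_mulVec_apply (f β : Fin d → ℝ) (i : Fin d) :
    (scaledKernel C f *ᵥ β) i =
      exp (-f i / 2) * (kernelK C *ᵥ ((fun j => exp (-f j / 2)) * β)) i := by
  rw [scaledKernel_eq_diagonal_mul, ← mulVec_mulVec, ← mulVec_mulVec, mulVec_diagonal]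
  congr 2
  ext j
  exact mulVec_diagonal _ _ j

lemma scaledKernel_posSemidef (hK : (kernelK C).PosSemidef) (f : Fin d → ℝ) :
    (scaledKernel C f).PosSemidef := by
  rw [scaledKernel_eq_diagonal_mul]
  simpa using hK.mul_mul_conjTranspose_same (diagonal fun i => exp (-f i / 2))

lemma scaledKernel_sub_const (f : Fin d → ℝ) (c : ℝ) :
    scaledKernel C (fun i => f i - c) = exp c • scaledKernel C f := by
  ext i j
  simp only [scaledKernel, of_apply, Matrix.smul_apply, smul_eq_mul, ← exp_add]
  ring_nf

lemma scaledKernel_mulVec_pos {β : Fin d → ℝ} (hβ : β ∈ simplexS d) (f : Fin d → ℝ)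
    (i : Fin d) : 0 < (scaledKernel C f *ᵥ β) i := by
  rw [mulVec, dotProduct_comm]
  exact dotProduct_pos_of_mem_stdSimplex hβ fun j => exp_pos _

lemma scaledKernel_mulVec_congr {β f g : Fin d → ℝ} (hfg : ∀ j, β j ≠ 0 → f j = g j)
    (i : Fin d) :
    (scaledKernel C g *ᵥ β) i = exp ((f i - g i) / 2) * (scaledKernel C f *ᵥ β) i := by
  simp only [mulVec, dotProduct, scaledKernel, of_apply, mul_sum]
  refine sum_congr rfl fun j _ => ?_
  rcases eq_or_ne (β j) 0 with hj | hj
  · simp [hj]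
  · rw [← hfg j hj, ← mul_assoc, ← exp_add]
    ring_nf

lemma Tsoft_neg_apply {β g : Fin d → ℝ} {i : Fin d} (hi : (scaledKernel C g *ᵥ β) i ≠ 0) :
    Tsoft C (-g) β i = -g i - 2 * log ((scaledKernel C g *ᵥ β) i) := by
  have hsum : ∑ j, β j * exp (((-g) j - C i j) / 2) =
      exp (g i / 2) * (scaledKernel C g *ᵥ β) i := by
    simp only [mulVec, dotProduct, scaledKernel, of_apply, mul_sum, Pi.neg_apply]
    refine sum_congr rfl fun j _ => ?_
    rw [mul_comm (β j), ← mul_assoc, ← exp_add]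
    ring_nf
  rw [Tsoft, hsum, log_mul (exp_ne_zero _) hi, log_exp]
  ring

lemma isSinkhornPotential_iff {β h : Fin d → ℝ} (hβ : β ∈ simplexS d) :
    IsSinkhornPotential C β h ↔ scaledKernel C h *ᵥ β = 1 := by
  have hpos := scaledKernel_mulVec_pos (C := C) hβ h
  simp only [IsSinkhornPotential, funext_iff, Pi.neg_apply, Tsoft_neg_apply (hpos _).ne',
    Pi.one_apply]
  refine forall_congr' fun i => ?_
  constructor
  · intro hi
    exact eq_one_of_pos_of_log_eq_zero (hpos i) (by linarith)
  · intro hi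
    rw [hi, log_one]
    ring

lemma IsSinkhornPotential.unique (hK : (kernelK C).PosDef) {β g h : Fin d → ℝ}
    (hβ : β ∈ simplexS d) (hg : IsSinkhornPotential C β g) (hh : IsSinkhornPotential C β h) :
    g = h := by
  rw [isSinkhornPotential_iff hβ] at hg hh
  have hexp := hK.eq_of_mul_mulVec_mul_eq_one hβ.1 (fun i => exp_pos (-g i / 2))
    (fun i => exp_pos (-h i / 2)) (fun i => by rw [← scaledKernel_mulVec_apply, hg]; rfl)
    (fun i => by rw [← scaledKernel_mulVec_apply, hh]; rfl)
  funext i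
  have := congrFun hexp i
  simp only [exp_eq_exp] at this
  linarith

lemma gradOmega_eq (hK : (kernelK C).PosDef) {β h : Fin d → ℝ} (hβ : β ∈ simplexS d)
    (hh : IsSinkhornPotential C β h) : gradOmega C β = h := by
  have hex : ∃ g, IsSinkhornPotential C β g := ⟨h, hh⟩
  rw [gradOmega, dif_pos hex]
  exact hex.choose_spec.unique hK hβ hh

end SinkhornPotential

section Negentropy

variable {d : ℕ} {C : Matrix (Fin d) (Fin d) ℝ}

lemma omega_eq_of_scaledKernel_mulVec_eq_one (hC : C.IsSymm) {β h : Fin d → ℝ}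
    (hβ : ∀ i, 0 ≤ β i) (hh : scaledKernel C h *ᵥ β = 1) :
    Omega C β = ∑ i, β i * h i := by
  set q := gibbsPlan C 2 β β (-h) (-h)
  have hq : ∀ i j, q i j = β i * scaledKernel C h i j * β j := by
    intro i j
    simp only [q, gibbsPlan, scaledKernel, of_apply, Pi.neg_apply]
    ring_nf
  have hrow : ∀ i, ∑ j, q i j = β i := by
    intro i
    simpa [hq, mulVec, dotProduct, mul_sum, mul_assoc] using congrArg (β i * ·) (congrFun hh i)
  have hsymm : ∀ i j, q i j = q j i := by
    intro i j
    rw [hq, hq, (scaledKernel_isSymm hC h).apply i j]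
    ring
  have hmem : q ∈ couplings β β :=
    ⟨fun i j => by rw [hq]; exact mul_nonneg (mul_nonneg (hβ i) (exp_pos _).le) (hβ j), hrow,
      fun j => by simpa only [hsymm _ j] using hrow j,
      fun i j hij => by rw [hq, mul_right_comm, hij, zero_mul]⟩
  rw [Omega, OT_eq_of_gibbsPlan_mem_couplings two_pos hmem]
  simp only [Pi.neg_apply, mul_neg, sum_neg_distrib]
  ring

lemma DOmega_eq_of_isSinkhornPotential (hC : C.IsSymm) (hK : (kernelK C).PosDef)
    {β h : Fin d → ℝ} (hβ : β ∈ simplexS d) (hh : IsSinkhornPotential C β h)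
    (α : Fin d → ℝ) : DOmega C α β = Omega C α - ∑ i, α i * h i := by
  rw [DOmega, gradOmega_eq hK hβ hh,
    omega_eq_of_scaledKernel_mulVec_eq_one hC hβ.1 ((isSinkhornPotential_iff hβ).1 hh)]
  simp only [mul_comm (h _), sub_mul, sum_sub_distrib]
  ring

lemma FYloss_eq {α : Fin d → ℝ} (hα : ∑ i, α i = 1) (f : Fin d → ℝ) :
    FYloss C α f = Omega C α - ∑ i, α i * (f i - OmegaStar C f) := by
  simp only [FYloss, mul_sub, sum_sub_distrib, ← sum_mul, hα]
  ring

end Negentropy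

section GeometricSoftmax

variable {d : ℕ} {C : Matrix (Fin d) (Fin d) ℝ}

lemma omegaStar_eq_of_isMinOn {f β : Fin d → ℝ} (hβ : β ∈ simplexS d)
    (hmin : IsMinOn (fun γ => Phi C γ f) (simplexS d) β) :
    OmegaStar C f = -log (Phi C β f) := by
  rw [OmegaStar,
    IsLeast.csInf_eq ⟨Set.mem_image_of_mem _ hβ, Set.forall_mem_image.2 fun _ hγ => hmin hγ⟩]

lemma phi_pos {β : Fin d → ℝ} (hβ : β ∈ simplexS d) (f : Fin d → ℝ) :
    0 < Phi C β f := by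
  rw [phi_eq_dotProduct_mulVec]
  exact dotProduct_pos_of_mem_stdSimplex hβ (scaledKernel_mulVec_pos hβ f)

lemma gsoftmax_spec (hd : (simplexS d).Nonempty) (C : Matrix (Fin d) (Fin d) ℝ)
    (f : Fin d → ℝ) :
    gsoftmax C f ∈ simplexS d ∧ IsMinOn (fun β => Phi C β f) (simplexS d) (gsoftmax C f) := by
  have hcont : Continuous fun β : Fin d → ℝ => Phi C β f := by
    unfold Phi
    fun_prop
  have hex : ∃ β ∈ simplexS d, IsMinOn (fun β => Phi C β f) (simplexS d) β :=
    (isCompact_stdSimplex ℝ (Fin d)).exists_isMinOn hd hcont.continuousOn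
  rw [gsoftmax, dif_pos hex]
  exact hex.choose_spec

lemma extrap_apply (hd : (simplexS d).Nonempty) (f : Fin d → ℝ) (i : Fin d) :
    extrap C f i =
      f i + 2 * log ((scaledKernel C f *ᵥ gsoftmax C f) i / Phi C (gsoftmax C f) f) := by
  obtain ⟨hβ, hmin⟩ := gsoftmax_spec hd C f
  have hm := scaledKernel_mulVec_pos (C := C) hβ f i
  have hP := phi_pos (C := C) hβ f
  have hshift := scaledKernel_mulVec_pos (C := C) hβ (fun j => f j - OmegaStar C f) i
  rw [extrap, show (fun j => -(f j - OmegaStar C f)) = -fun j => f j - OmegaStar C f from rfl,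
    Tsoft_neg_apply hshift.ne', scaledKernel_sub_const, smul_mulVec, Pi.smul_apply,
    smul_eq_mul, log_mul (exp_ne_zero _) hm.ne', log_exp, omegaStar_eq_of_isMinOn hβ hmin,
    log_div hm.ne' hP.ne']
  ring

lemma isMinOn_gsoftmax_dotProduct_mulVec (hd : (simplexS d).Nonempty)
    (C : Matrix (Fin d) (Fin d) ℝ) (f : Fin d → ℝ) :
    IsMinOn (fun β => β ⬝ᵥ scaledKernel C f *ᵥ β) (simplexS d) (gsoftmax C f) := by
  simpa only [phi_eq_dotProduct_mulVec] using (gsoftmax_spec hd C f).2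

lemma le_extrap (hd : (simplexS d).Nonempty) (hC : C.IsSymm) (f : Fin d → ℝ) (i : Fin d) :
    f i ≤ extrap C f i := by
  obtain ⟨hβ, -⟩ := gsoftmax_spec hd C f
  have hge := mulVec_apply_ge_of_isMinOn (scaledKernel_isSymm hC f) hβ
    (isMinOn_gsoftmax_dotProduct_mulVec hd C f) i
  rw [← phi_eq_dotProduct_mulVec] at hge
  have := log_nonneg ((one_le_div (phi_pos hβ f)).2 hge)
  rw [extrap_apply hd]
  linarith

lemma extrap_eq_of_gsoftmax_ne_zero (hd : (simplexS d).Nonempty) (hC : C.IsSymm)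
    {f : Fin d → ℝ} {i : Fin d}
    (hi : gsoftmax C f i ≠ 0) : extrap C f i = f i := by
  obtain ⟨hβ, -⟩ := gsoftmax_spec hd C f
  rw [extrap_apply hd, mulVec_apply_eq_of_isMinOn (scaledKernel_isSymm hC f) hβ
    (isMinOn_gsoftmax_dotProduct_mulVec hd C f) hi, ← phi_eq_dotProduct_mulVec,
    div_self (phi_pos hβ f).ne', log_one]
  ring

lemma scaledKernel_extrap_mulVec_gsoftmax (hd : (simplexS d).Nonempty) (hC : C.IsSymm)
    (f : Fin d → ℝ) :
    scaledKernel C (extrap C f) *ᵥ gsoftmax C f = fun _ => Phi C (gsoftmax C f) f := by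
  obtain ⟨hβ, -⟩ := gsoftmax_spec hd C f
  funext i
  have hm := scaledKernel_mulVec_pos (C := C) hβ f i
  have hP := phi_pos (C := C) hβ f
  rw [scaledKernel_mulVec_congr (f := f)
      (fun j hj => (extrap_eq_of_gsoftmax_ne_zero hd hC hj).symm) i,
    extrap_apply hd, show ∀ x, (f i - (f i + 2 * log x)) / 2 = -log x by intro; ring, exp_neg,
    exp_log (div_pos hm hP)]
  field_simp

lemma omegaStar_extrap (hd : (simplexS d).Nonempty) (hC : C.IsSymm)
    (hK : (kernelK C).PosSemidef) (f : Fin d → ℝ) :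
    OmegaStar C (extrap C f) = OmegaStar C f := by
  obtain ⟨hβ, hmin⟩ := gsoftmax_spec hd C f
  have hc := scaledKernel_extrap_mulVec_gsoftmax hd hC f
  have hminE : IsMinOn (fun γ => Phi C γ (extrap C f)) (simplexS d) (gsoftmax C f) := by
    simpa only [phi_eq_dotProduct_mulVec] using
      (isMinOn_of_mulVec_eq_const (scaledKernel_posSemidef hK _) hc).on_subset
        fun γ hγ => hγ.2.trans hβ.2.symm
  rw [omegaStar_eq_of_isMinOn hβ hminE, omegaStar_eq_of_isMinOn hβ hmin,
    phi_eq_dotProduct_mulVec (f := extrap C f), hc]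
  simp [dotProduct, ← sum_mul, hβ.2]

lemma isSinkhornPotential_extrap_sub_omegaStar (hd : (simplexS d).Nonempty) (hC : C.IsSymm)
    (f : Fin d → ℝ) :
    IsSinkhornPotential C (gsoftmax C f) (fun i => extrap C f i - OmegaStar C f) := by
  obtain ⟨hβ, hmin⟩ := gsoftmax_spec hd C f
  rw [isSinkhornPotential_iff hβ, scaledKernel_sub_const, smul_mulVec,
    scaledKernel_extrap_mulVec_gsoftmax hd hC, omegaStar_eq_of_isMinOn hβ hmin]
  funext i
  simp [exp_neg, exp_log (phi_pos hβ f), inv_mul_cancel₀ (phi_pos hβ f).ne']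

end GeometricSoftmax

theorem fy_loss_upper_bounds_hausdorff_general (d : ℕ)
    (C : Matrix (Fin d) (Fin d) ℝ) (hCsym : C.IsSymm)
    (hK : (kernelK C).PosDef) (α : Fin d → ℝ) (hα : α ∈ simplexS d) (f : Fin d → ℝ) :
    DOmega C α (gsoftmax C f) = FYloss C α (extrap C f) ∧
    FYloss C α (extrap C f) = FYloss C α f - ∑ i, α i * (extrap C f i - f i) ∧
    DOmega C α (gsoftmax C f) ≤ FYloss C α f ∧
    (Function.support (gsoftmax C f) = Function.support α →
      DOmega C α (gsoftmax C f) = FYloss C α f) := by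
  have hd : (simplexS d).Nonempty := ⟨α, hα⟩
  have hD := DOmega_eq_of_isSinkhornPotential hCsym hK (gsoftmax_spec hd C f).1
    (isSinkhornPotential_extrap_sub_omegaStar hd hCsym f) α
  have hFE := FYloss_eq (C := C) hα.2 (extrap C f)
  rw [omegaStar_extrap hd hCsym hK.posSemidef] at hFE
  have hF := FYloss_eq (C := C) hα.2 f
  have hgap : FYloss C α (extrap C f) = FYloss C α f - ∑ i, α i * (extrap C f i - f i) := by
    rw [hFE, hF, sub_sub, ← sum_add_distrib]
    exact congrArg _ (sum_congr rfl fun i _ => by ring)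
  refine ⟨hD.trans hFE.symm, hgap, ?_, fun hsupp => ?_⟩
  · have hgap_nonneg := sum_nonneg fun i (_ : i ∈ univ) =>
      mul_nonneg (hα.1 i) (sub_nonneg.2 (le_extrap hd hCsym f i))
    linarith
  · have hzero : ∑ i, α i * (extrap C f i - f i) = 0 := sum_eq_zero fun i _ => by
      by_cases hi : α i = 0
      · rw [hi, zero_mul]
      · rw [extrap_eq_of_gsoftmax_ne_zero hd hCsym (hsupp.symm ▸ hi : i ∈ Function.support _),
          sub_self, mul_zero]
    rw [hD, ← hFE, hgap, hzero, sub_zero]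

/-- The Fenchel-Young loss upper-bounds the asymmetric Hausdorff divergence:
`D_Ω(α, g-softmax(f)) = ℓ_Ω(α, f^E) = ℓ_Ω(α, f) - ⟨α, f^E - f⟩ ≤ ℓ_Ω(α, f)`, with
equality when the supports of `g-softmax(f)` and `α` coincide. -/
theorem fy_loss_upper_bounds_hausdorff (d : ℕ) (hd : 1 ≤ d)
    (C : Matrix (Fin d) (Fin d) ℝ) (hCsym : C.IsSymm) (hCdiag : ∀ i, C i i = 0)
    (hK : (kernelK C).PosDef) (α : Fin d → ℝ) (hα : α ∈ simplexS d) (f : Fin d → ℝ) :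
    DOmega C α (gsoftmax C f) = FYloss C α (extrap C f) ∧
    FYloss C α (extrap C f) = FYloss C α f - ∑ i, α i * (extrap C f i - f i) ∧
    DOmega C α (gsoftmax C f) ≤ FYloss C α f ∧
    (Function.support (gsoftmax C f) = Function.support α →
      DOmega C α (gsoftmax C f) = FYloss C α f) :=
  fy_loss_upper_bounds_hausdorff_general d C hCsym hK α hα f
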